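/- arXiv:1204.4420 — 2 statements merged into one kernel-verified Lean document; each statement's English description precedes it below -/
import Mathlib

section
/- (Proposition 2, case 1b) Assume J₁₁ > 0, J₁₂ < 0 and set λ_M = J₁₁ − J₁₂, λ_m = J₁₁ + J₁₂. Suppose either (λ_m < 0 and β > 2/λ_M) or (λ_m > 0 and 2/λ_M < β < 2/λ_m). Then f has exactly three critical points in (−1,1)²: the origin (0,0) and the two points ±(x̃,−x̃), where x̃ is the unique solution in (0,1) of x = tanh((βλ_M/2)·x). The origin is a saddle (inflection) point, while (x̃,−x̃) and (−x̃,x̃) are local maximum points of f. -/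
/-- The entropy function 𝓘(x) = ((1+x)log(1+x) + (1-x)log(1-x))/2.
Note `Real.log 0 = 0` in Mathlib, which implements the convention 0·log 0 = 0. -/
noncomputable def entI (x : ℝ) : ℝ :=
  ((1 + x) * Real.log (1 + x) + (1 - x) * Real.log (1 - x)) / 2

/-- Pressure functional of the symmetric zero-field bipartite mean-field model
(α₁ = α₂ = 1/2, J₁₁ = J₂₂, h₁ = h₂ = 0). -/
noncomputable def fSym (β J11 J12 : ℝ) (μ : ℝ × ℝ) : ℝ :=
  β / 8 * (J11 * (μ.1 ^ 2 + μ.2 ^ 2) + 2 * J12 * μ.1 * μ.2) - (entI μ.1 + entI μ.2) / 2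

/-- A critical point of f: a point of the open square (−1,1)² where both partial
derivatives of f vanish. -/
def IsCritPt (β J11 J12 : ℝ) (μ : ℝ × ℝ) : Prop :=
  μ.1 ∈ Set.Ioo (-1 : ℝ) 1 ∧ μ.2 ∈ Set.Ioo (-1 : ℝ) 1 ∧
    deriv (fun x => fSym β J11 J12 (x, μ.2)) μ.1 = 0 ∧
    deriv (fun y => fSym β J11 J12 (μ.1, y)) μ.2 = 0

/-!
Along the diagonal and the antidiagonal, `f` is the Curie–Weiss pressure `g_c t = c t² / 2 - 𝓘 t`
with `c = βλ_m / 2 < 1` and `c = βλ_M / 2 > 1` respectively, and in general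
`f (u, v) = (g u + g v) / 2 + β J₁₂ (u + v)² / 8` with `g = g_{βλ_M/2}`.
Since `g_c' t = c t - artanh t` and `artanh` is strictly convex on `[0, 1)` with slope `1` at `0`,
`artanh t / t` increases and exceeds `1`: for `c > 1`, `g_c` increases on `[0, x̃]` and decreases
on `[x̃, 1)`; for `c < 1` it is negative on `(0, 1)`. As `J₁₂ < 0`, the points `±(x̃, -x̃)` thus
maximise `f` on the whole open square, while `(0, 0)` is a saddle.
Adding the two critical-point equations gives `φ u = φ (-v)` for the increasing odd function
`φ t = artanh t - βλ_m t / 2`, so every critical point lies on the antidiagonal.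
-/

open Real Set Filter Topology

namespace Real

lemma artanh_eq_half_sub_log {x : ℝ} (hx : x ∈ Ioo (-1) 1) :
    artanh x = (log (1 + x) - log (1 - x)) / 2 := by
  rw [artanh_eq_half_log (Ioo_subset_Icc_self hx),
    log_div (by linarith [hx.1]) (by linarith [hx.2])]
  ring

lemma artanh_neg_eq (x : ℝ) : artanh (-x) = -artanh x := by
  rw [artanh, artanh, ← log_inv, ← sqrt_inv, inv_div, ← sub_eq_add_neg, sub_neg_eq_add]

lemma hasDerivAt_artanh {x : ℝ} (hx : x ∈ Ioo (-1) 1) :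
    HasDerivAt artanh (1 - x ^ 2)⁻¹ x := by
  have hp : 1 + x ≠ 0 := by linarith [hx.1]
  have hm : 1 - x ≠ 0 := by linarith [hx.2]
  have hlog := ((((hasDerivAt_id x).const_add 1).log hp).sub
    (((hasDerivAt_id x).const_sub 1).log hm)).div_const 2
  refine (hlog.congr_of_eventuallyEq ?_).congr_deriv ?_
  · filter_upwards [isOpen_Ioo.mem_nhds hx] with y hy using artanh_eq_half_sub_log hy
  · have : 1 - x ^ 2 ≠ 0 := by nlinarith [hx.1, hx.2]
    simp only [id]
    field_simp
    ring

lemma continuousOn_artanh : ContinuousOn artanh (Ioo (-1) 1) :=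
  fun _ hx ↦ (hasDerivAt_artanh hx).continuousAt.continuousWithinAt

lemma strictConvexOn_artanh : StrictConvexOn ℝ (Ico 0 1) artanh := by
  refine StrictMonoOn.strictConvexOn_of_deriv (convex_Ico 0 1)
    (continuousOn_artanh.mono fun x hx ↦ ⟨by linarith [hx.1], hx.2⟩) ?_
  rw [interior_Ico]
  intro x hx y hy hxy
  rw [(hasDerivAt_artanh ⟨by linarith [hx.1], hx.2⟩).deriv,
    (hasDerivAt_artanh ⟨by linarith [hy.1], hy.2⟩).deriv]
  have : 0 < 1 - y ^ 2 := by nlinarith [hy.1, hy.2]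
  gcongr
  nlinarith [hx.1]

lemma lt_artanh {x : ℝ} (hx : x ∈ Ioo 0 1) : x < artanh x := by
  have := strictConvexOn_artanh.lt_slope_of_hasDerivAt ⟨le_rfl, one_pos⟩
    (Ioo_subset_Ico_self hx) hx.1 (hasDerivAt_artanh ⟨by norm_num, by norm_num⟩)
  rw [slope_def_field, artanh_zero] at this
  simpa [lt_div_iff₀ hx.1] using this

lemma artanh_lt_div {x : ℝ} (hx : x ∈ Ioo 0 1) : artanh x < x / (1 - x ^ 2) := by
  have := strictConvexOn_artanh.slope_lt_of_hasDerivAt ⟨le_rfl, one_pos⟩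
    (Ioo_subset_Ico_self hx) hx.1 (hasDerivAt_artanh ⟨by linarith [hx.1], hx.2⟩)
  rw [slope_def_field, artanh_zero, sub_zero, sub_zero, div_lt_iff₀ hx.1] at this
  rwa [div_eq_inv_mul]

lemma strictMonoOn_artanh_div : StrictMonoOn (fun x ↦ artanh x / x) (Ioo 0 1) := by
  intro x hx y hy hxy
  simpa [artanh_zero] using strictConvexOn_artanh.secant_strict_mono ⟨le_rfl, one_pos⟩
    (Ioo_subset_Ico_self hx) (Ioo_subset_Ico_self hy) hx.1.ne' hy.1.ne' hxy

lemma hasDerivAt_artanh_sub_mul (c : ℝ) {x : ℝ} (hx : x ∈ Ioo (-1) 1) :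
    HasDerivAt (fun x ↦ artanh x - c * x) ((1 - x ^ 2)⁻¹ - c) x :=
  ((hasDerivAt_artanh hx).sub ((hasDerivAt_id' x).const_mul c)).congr_deriv (by ring)

lemma strictMonoOn_artanh_sub_mul {c : ℝ} (hc : c < 1) :
    StrictMonoOn (fun x ↦ artanh x - c * x) (Ioo (-1) 1) := by
  have hd := fun x (hx : x ∈ Ioo (-1 : ℝ) 1) ↦ hasDerivAt_artanh_sub_mul c hx
  refine strictMonoOn_of_deriv_pos (convex_Ioo _ _)
    (fun x hx ↦ (hd x hx).continuousAt.continuousWithinAt) fun x hx ↦ ?_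
  rw [interior_Ioo] at hx
  have : 1 ≤ (1 - x ^ 2)⁻¹ := (one_le_inv₀ (by nlinarith [hx.1, hx.2])).2 (by nlinarith)
  rw [(hd x hx).deriv]
  linarith

lemma exists_artanh_eq_mul {c : ℝ} (hc : 1 < c) : ∃ x ∈ Ioo 0 1, artanh x = c * x := by
  have ha : 1 - c⁻¹ ∈ Ioo (0 : ℝ) 1 :=
    ⟨sub_pos.2 (inv_lt_one_of_one_lt₀ hc), sub_lt_self _ (inv_pos.2 (by linarith))⟩
  have hb : tanh c ∈ Ioo (0 : ℝ) 1 := by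
    refine ⟨?_, tanh_lt_one c⟩
    rw [tanh_eq_sinh_div_cosh]
    exact div_pos (sinh_pos_iff.2 (by linarith)) (cosh_pos c)
  -- at `a = 1 - c⁻¹`, `1 - a² > 1 - a = c⁻¹` turns `artanh a < a / (1 - a²)` into `artanh a < c a`
  have hlow : artanh (1 - c⁻¹) - c * (1 - c⁻¹) ≤ 0 := by
    set a := 1 - c⁻¹ with ha_def
    have hca : c * (1 - a) = 1 := by
      rw [ha_def, sub_sub_cancel, mul_inv_cancel₀ (by linarith)]
    have hsq : 0 < 1 - a ^ 2 := by nlinarith [ha.1, ha.2]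
    have hprod : c * a * (1 - a ^ 2) = a * (1 + a) := by linear_combination a * (1 + a) * hca
    have : a / (1 - a ^ 2) ≤ c * a := by
      rw [div_le_iff₀ hsq]
      nlinarith [ha.1]
    linarith [artanh_lt_div ha]
  have hhigh : 0 ≤ artanh (tanh c) - c * tanh c := by
    rw [artanh_tanh]
    nlinarith [hb.2]
  have hcont : ContinuousOn (fun x ↦ artanh x - c * x) (Ioo 0 1) := fun x hx ↦
    (hasDerivAt_artanh_sub_mul c ⟨by linarith [hx.1], hx.2⟩).continuousAt.continuousWithinAt
  obtain ⟨x, hx, hx0⟩ := isPreconnected_Ioo.intermediate_value ha hb hcont ⟨hlow, hhigh⟩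
  exact ⟨x, hx, sub_eq_zero.1 hx0⟩

lemma eq_of_artanh_eq_mul {c y z : ℝ} (hy : y ∈ Ioo 0 1) (hz : z ∈ Ioo 0 1)
    (hy' : artanh y = c * y) (hz' : artanh z = c * z) : y = z :=
  strictMonoOn_artanh_div.injOn hy hz <| by
    simp only [hy', hz', mul_div_cancel_right₀ _ hy.1.ne', mul_div_cancel_right₀ _ hz.1.ne']

lemma artanh_eq_mul_iff {c x : ℝ} (hx : x ∈ Ioo (-1) 1) : artanh x = c * x ↔ x = tanh (c * x) :=
  ⟨fun h ↦ by rw [← h, tanh_artanh hx], fun h ↦ by conv_lhs => rw [h, artanh_tanh]⟩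

lemma eq_neg_of_artanh_add_eq {c u v : ℝ} (hc : c < 1) (hu : u ∈ Ioo (-1) 1)
    (hv : v ∈ Ioo (-1) 1) (h : artanh u + artanh v = c * (u + v)) : v = -u := by
  have : u = -v := (strictMonoOn_artanh_sub_mul hc).injOn hu
    (neg_mem_Ioo_iff.2 (by rwa [neg_neg])) (by simp only [artanh_neg_eq]; linarith)
  linarith

lemma eq_zero_or_eq_or_eq_neg_of_artanh_eq_mul {c xt u : ℝ} (hxt : xt ∈ Ioo 0 1)
    (heq : artanh xt = c * xt) (hu : u ∈ Ioo (-1) 1) (h : artanh u = c * u) :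
    u = 0 ∨ u = xt ∨ u = -xt := by
  rcases lt_trichotomy u 0 with hneg | rfl | hpos
  · have := eq_of_artanh_eq_mul ⟨neg_pos.2 hneg, by linarith [hu.1]⟩ hxt
      (by rw [artanh_neg_eq, h]; ring) heq
    exact Or.inr (Or.inr (by linarith))
  · exact Or.inl rfl
  · exact Or.inr (Or.inl (eq_of_artanh_eq_mul ⟨hpos, hu.2⟩ hxt h heq))

end Real

lemma entI_zero : entI 0 = 0 := by simp [entI]

lemma entI_neg (x : ℝ) : entI (-x) = entI x := by
  simp only [entI, sub_neg_eq_add, ← sub_eq_add_neg]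
  ring

lemma hasDerivAt_entI {x : ℝ} (hx : x ∈ Ioo (-1) 1) : HasDerivAt entI (artanh x) x := by
  have hp : 1 + x ≠ 0 := by linarith [hx.1]
  have hm : 1 - x ≠ 0 := by linarith [hx.2]
  have hadd : HasDerivAt (fun y : ℝ ↦ 1 + y) 1 x := (hasDerivAt_id' x).const_add 1
  have hsub : HasDerivAt (fun y : ℝ ↦ 1 - y) (-1) x := (hasDerivAt_id' x).const_sub 1
  refine (((hadd.mul (hadd.log hp)).add (hsub.mul (hsub.log hm))).div_const 2).congr_deriv ?_
  rw [artanh_eq_half_sub_log hx]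
  field_simp
  ring

/-- Pressure of the Curie–Weiss model at effective coupling `c = βJ`. -/
noncomputable def cwPressure (c x : ℝ) : ℝ := c / 2 * x ^ 2 - entI x

lemma cwPressure_zero (c : ℝ) : cwPressure c 0 = 0 := by simp [cwPressure, entI_zero]

lemma cwPressure_neg (c x : ℝ) : cwPressure c (-x) = cwPressure c x := by
  simp [cwPressure, entI_neg]

lemma hasDerivAt_cwPressure (c : ℝ) {x : ℝ} (hx : x ∈ Ioo (-1) 1) :
    HasDerivAt (cwPressure c) (c * x - artanh x) x :=
  (((hasDerivAt_pow 2 x).const_mul (c / 2)).sub (hasDerivAt_entI hx)).congr_deriv (by ring)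

section Monotonicity

variable {c : ℝ} {D : Set ℝ}

lemma strictMonoOn_cwPressure (hD : Convex ℝ D) (hD1 : D ⊆ Ioo (-1) 1)
    (h : ∀ x ∈ interior D, artanh x < c * x) : StrictMonoOn (cwPressure c) D :=
  strictMonoOn_of_deriv_pos hD
    (fun x hx ↦ (hasDerivAt_cwPressure c (hD1 hx)).continuousAt.continuousWithinAt)
    fun x hx ↦ by
      rw [(hasDerivAt_cwPressure c (hD1 (interior_subset hx))).deriv]
      linarith [h x hx]

lemma strictAntiOn_cwPressure (hD : Convex ℝ D) (hD1 : D ⊆ Ioo (-1) 1)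
    (h : ∀ x ∈ interior D, c * x < artanh x) : StrictAntiOn (cwPressure c) D :=
  strictAntiOn_of_deriv_neg hD
    (fun x hx ↦ (hasDerivAt_cwPressure c (hD1 hx)).continuousAt.continuousWithinAt)
    fun x hx ↦ by
      rw [(hasDerivAt_cwPressure c (hD1 (interior_subset hx))).deriv]
      linarith [h x hx]

end Monotonicity

section SupercriticalCoupling

variable {c xt : ℝ}

lemma strictMonoOn_cwPressure_Icc (hxt : xt ∈ Ioo 0 1) (heq : artanh xt = c * xt) :
    StrictMonoOn (cwPressure c) (Icc 0 xt) := by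
  refine strictMonoOn_cwPressure (convex_Icc 0 xt)
    (fun x hx ↦ ⟨by linarith [hx.1], hx.2.trans_lt hxt.2⟩) fun x hx ↦ ?_
  rw [interior_Icc] at hx
  have hx1 : x ∈ Ioo (0 : ℝ) 1 := ⟨hx.1, hx.2.trans hxt.2⟩
  have : artanh x / x < artanh xt / xt := strictMonoOn_artanh_div hx1 hxt hx.2
  rwa [heq, mul_div_cancel_right₀ _ hxt.1.ne', div_lt_iff₀ hx1.1] at this

lemma strictAntiOn_cwPressure_Ico (hxt : xt ∈ Ioo 0 1) (heq : artanh xt = c * xt) :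
    StrictAntiOn (cwPressure c) (Ico xt 1) := by
  refine strictAntiOn_cwPressure (convex_Ico xt 1)
    (fun x hx ↦ ⟨by linarith [hx.1, hxt.1], hx.2⟩) fun x hx ↦ ?_
  rw [interior_Ico] at hx
  have hx1 : x ∈ Ioo (0 : ℝ) 1 := ⟨hxt.1.trans hx.1, hx.2⟩
  have : artanh xt / xt < artanh x / x := strictMonoOn_artanh_div hxt hx1 hx.1
  rwa [heq, mul_div_cancel_right₀ _ hxt.1.ne', lt_div_iff₀ hx1.1] at this

lemma cwPressure_pos (hxt : xt ∈ Ioo 0 1) (heq : artanh xt = c * xt) {t : ℝ}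
    (ht : t ∈ Ioc 0 xt) : 0 < cwPressure c t := by
  simpa [cwPressure_zero] using strictMonoOn_cwPressure_Icc hxt heq
    ⟨le_rfl, hxt.1.le⟩ (Ioc_subset_Icc_self ht) ht.1

lemma cwPressure_le_of_artanh_eq (hxt : xt ∈ Ioo 0 1) (heq : artanh xt = c * xt) {x : ℝ}
    (hx : x ∈ Ioo (-1) 1) :
    cwPressure c x ≤ cwPressure c xt := by
  wlog hx0 : 0 ≤ x generalizing x
  · rw [← cwPressure_neg]
    exact this ⟨by linarith [hx.2], by linarith [hx.1]⟩ (by linarith)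
  rcases le_total x xt with h | h
  · exact (strictMonoOn_cwPressure_Icc hxt heq).monotoneOn ⟨hx0, h⟩ ⟨hxt.1.le, le_rfl⟩ h
  · exact (strictAntiOn_cwPressure_Ico hxt heq).antitoneOn ⟨le_rfl, hxt.2⟩ ⟨h, hx.2⟩ h

end SupercriticalCoupling

lemma cwPressure_lt_zero {c t : ℝ} (hc : c ≤ 1) (ht : t ∈ Ioo 0 1) :
    cwPressure c t < 0 := by
  have hanti : StrictAntiOn (cwPressure c) (Ico 0 1) :=
    strictAntiOn_cwPressure (convex_Ico 0 1) (fun x hx ↦ ⟨by linarith [hx.1], hx.2⟩)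
      fun x hx ↦ by
        rw [interior_Ico] at hx
        nlinarith [lt_artanh hx, hx.1]
  simpa [cwPressure_zero] using hanti ⟨le_rfl, one_pos⟩ (Ioo_subset_Ico_self ht) ht.1

section Pressure

variable {β J11 J12 : ℝ}

lemma fSym_swap (β J11 J12 u v : ℝ) : fSym β J11 J12 (u, v) = fSym β J11 J12 (v, u) := by
  simp only [fSym]
  ring

lemma fSym_eq_cwPressure (β J11 J12 u v : ℝ) :
    fSym β J11 J12 (u, v) = (cwPressure (β * (J11 - J12) / 2) u +
      cwPressure (β * (J11 - J12) / 2) v) / 2 + β * J12 / 8 * (u + v) ^ 2 := by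
  simp only [fSym, cwPressure]
  ring

lemma fSym_diag (β J11 J12 t : ℝ) :
    fSym β J11 J12 (t, t) = cwPressure (β * (J11 + J12) / 2) t := by
  simp only [fSym, cwPressure]
  ring

lemma fSym_antidiag (β J11 J12 t : ℝ) :
    fSym β J11 J12 (t, -t) = cwPressure (β * (J11 - J12) / 2) t := by
  rw [fSym_eq_cwPressure, cwPressure_neg, add_neg_cancel]
  ring

lemma hasDerivAt_fSym_fst (β J11 J12 v : ℝ) {u : ℝ} (hu : u ∈ Ioo (-1) 1) :
    HasDerivAt (fun x ↦ fSym β J11 J12 (x, v)) (β / 4 * (J11 * u + J12 * v) - artanh u / 2) u := by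
  have hpoly := (((hasDerivAt_pow 2 u).add_const (v ^ 2)).const_mul J11).add
    (((hasDerivAt_id' u).const_mul (2 * J12)).mul_const v)
  exact ((hpoly.const_mul (β / 8)).sub
    (((hasDerivAt_entI hu).add_const (entI v)).div_const 2)).congr_deriv (by ring)

lemma hasDerivAt_fSym_snd (β J11 J12 u : ℝ) {v : ℝ} (hv : v ∈ Ioo (-1) 1) :
    HasDerivAt (fun y ↦ fSym β J11 J12 (u, y)) (β / 4 * (J11 * v + J12 * u) - artanh v / 2) v := by
  simpa only [fSym_swap β J11 J12 u] using hasDerivAt_fSym_fst β J11 J12 u hv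

lemma isCritPt_iff {u v : ℝ} :
    IsCritPt β J11 J12 (u, v) ↔ u ∈ Ioo (-1) 1 ∧ v ∈ Ioo (-1) 1 ∧
      artanh u = β / 2 * (J11 * u + J12 * v) ∧ artanh v = β / 2 * (J11 * v + J12 * u) := by
  refine and_congr_right fun hu ↦ and_congr_right fun hv ↦ ?_
  rw [(hasDerivAt_fSym_fst β J11 J12 v hu).deriv, (hasDerivAt_fSym_snd β J11 J12 u hv).deriv]
  constructor <;> rintro ⟨h1, h2⟩ <;> constructor <;> linarith

end Pressure

section Extrema

variable {β J11 J12 : ℝ}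

lemma setOf_isCritPt_eq {xt : ℝ} (hcm : β * (J11 + J12) / 2 < 1) (hxt : xt ∈ Ioo 0 1)
    (heq : artanh xt = β * (J11 - J12) / 2 * xt) :
    {μ | IsCritPt β J11 J12 μ} = {(0, 0), (xt, -xt), (-xt, xt)} := by
  have hxt' : xt ∈ Ioo (-1) 1 := ⟨by linarith [hxt.1], hxt.2⟩
  have hnxt : -xt ∈ Ioo (-1) 1 := neg_mem_Ioo_iff.2 (by rwa [neg_neg])
  ext ⟨u, v⟩
  simp only [mem_ofPred_eq, mem_insert_iff, mem_singleton_iff, Prod.mk.injEq, isCritPt_iff]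
  constructor
  · rintro ⟨hu, hv, hu', hv'⟩
    obtain rfl : v = -u := eq_neg_of_artanh_add_eq hcm hu hv (by rw [hu', hv']; ring)
    have : artanh u = β * (J11 - J12) / 2 * u := by rw [hu']; ring
    rcases eq_zero_or_eq_or_eq_neg_of_artanh_eq_mul hxt heq hu this with rfl | rfl | rfl <;> simp
  · rintro (⟨rfl, rfl⟩ | ⟨rfl, rfl⟩ | ⟨rfl, rfl⟩)
    · simp [artanh_zero]
    · refine ⟨hxt', hnxt, ?_, ?_⟩ <;> simp only [artanh_neg_eq, heq] <;> ring
    · refine ⟨hnxt, hxt', ?_, ?_⟩ <;> simp only [artanh_neg_eq, heq] <;> ring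

lemma isLocalMax_fSym_antidiag {a : ℝ} (hβ : 0 ≤ β) (hJ12 : J12 ≤ 0) (ha : a ∈ Ioo (-1) 1)
    (hmax : ∀ x ∈ Ioo (-1) 1,
      cwPressure (β * (J11 - J12) / 2) x ≤ cwPressure (β * (J11 - J12) / 2) a) :
    IsLocalMax (fSym β J11 J12) (a, -a) := by
  have hsq : Ioo (-1) 1 ×ˢ Ioo (-1) 1 ∈ 𝓝 (a, -a) := prod_mem_nhds (isOpen_Ioo.mem_nhds ha)
    (isOpen_Ioo.mem_nhds (neg_mem_Ioo_iff.2 (by rwa [neg_neg])))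
  filter_upwards [hsq] with ⟨u, v⟩ ⟨hu, hv⟩
  have : β * J12 / 8 * (u + v) ^ 2 ≤ 0 :=
    mul_nonpos_of_nonpos_of_nonneg (by nlinarith) (sq_nonneg _)
  rw [fSym_antidiag, fSym_eq_cwPressure]
  linarith [hmax u hu, hmax v hv]

lemma not_isLocalMax_fSym_zero (hc : 1 < β * (J11 - J12) / 2) :
    ¬IsLocalMax (fSym β J11 J12) (0, 0) := by
  intro hmax
  obtain ⟨xt, hxt, heq⟩ := exists_artanh_eq_mul hc
  have hcurve : IsLocalMax (fun t ↦ fSym β J11 J12 (t, -t)) 0 :=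
    IsLocalMax.comp_continuous (f := fSym β J11 J12) (g := fun t : ℝ ↦ (t, -t)) (b := 0)
      (by simpa using hmax) (by fun_prop)
  simp only [fSym_antidiag] at hcurve
  obtain ⟨t, hle, ht⟩ :=
    ((hcurve.filter_mono nhdsWithin_le_nhds).and (Ioo_mem_nhdsGT hxt.1)).exists
  linarith [cwPressure_pos hxt heq (Ioo_subset_Ioc_self ht), cwPressure_zero (β * (J11 - J12) / 2)]

lemma not_isLocalMin_fSym_zero (hcm : β * (J11 + J12) / 2 ≤ 1) :
    ¬IsLocalMin (fSym β J11 J12) (0, 0) := by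
  intro hmin
  have hcurve : IsLocalMin (fun t ↦ fSym β J11 J12 (t, t)) 0 :=
    IsLocalMin.comp_continuous (g := fun t : ℝ ↦ (t, t)) hmin (by fun_prop)
  simp only [fSym_diag] at hcurve
  obtain ⟨t, hle, ht⟩ :=
    ((hcurve.filter_mono nhdsWithin_le_nhds).and (Ioo_mem_nhdsGT one_pos)).exists
  linarith [cwPressure_lt_zero hcm ht, cwPressure_zero (β * (J11 + J12) / 2)]

end Extrema

/-- Proposition 2, case 1b: for J₁₁ > 0, J₁₂ < 0, with λ_M = J₁₁ − J₁₂, λ_m = J₁₁ + J₁₂,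
if (λ_m < 0 and β > 2/λ_M) or (λ_m > 0 and 2/λ_M < β < 2/λ_m), then f has exactly three
critical points: (0,0) (a saddle point) and ±(x̃,−x̃) (local maximum points), where x̃ is
the unique solution in (0,1) of x = tanh((βλ_M/2)x). -/
theorem prop2_case1b (β J11 J12 : ℝ) (hJ11 : 0 < J11) (hJ12 : J12 < 0) (hβ0 : 0 < β)
    (hcase : (J11 + J12 < 0 ∧ 2 / (J11 - J12) < β) ∨
      (0 < J11 + J12 ∧ 2 / (J11 - J12) < β ∧ β < 2 / (J11 + J12))) :
    ∃ xt : ℝ, xt ∈ Set.Ioo (0 : ℝ) 1 ∧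
      xt = Real.tanh (β * (J11 - J12) / 2 * xt) ∧
      (∀ y ∈ Set.Ioo (0 : ℝ) 1, y = Real.tanh (β * (J11 - J12) / 2 * y) → y = xt) ∧
      {μ : ℝ × ℝ | IsCritPt β J11 J12 μ} = {(0, 0), (xt, -xt), (-xt, xt)} ∧
      (¬ IsLocalMax (fSym β J11 J12) (0, 0) ∧ ¬ IsLocalMin (fSym β J11 J12) (0, 0)) ∧
      IsLocalMax (fSym β J11 J12) (xt, -xt) ∧ IsLocalMax (fSym β J11 J12) (-xt, xt) := by
  have hc : 1 < β * (J11 - J12) / 2 := by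
    have hβM : 2 / (J11 - J12) < β := hcase.elim (·.2) (·.2.1)
    rw [div_lt_iff₀ (by linarith)] at hβM
    linarith
  have hcm : β * (J11 + J12) / 2 < 1 := by
    rcases hcase with ⟨hneg, -⟩ | ⟨hpos, -, hβm⟩
    · nlinarith
    · rw [lt_div_iff₀ hpos] at hβm
      linarith
  obtain ⟨xt, hxt, heq⟩ := exists_artanh_eq_mul hc
  have hxt' : xt ∈ Ioo (-1) 1 := ⟨by linarith [hxt.1], hxt.2⟩
  have hmax x (hx : x ∈ Ioo (-1) 1) := cwPressure_le_of_artanh_eq hxt heq hx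
  refine ⟨xt, hxt, (artanh_eq_mul_iff hxt').1 heq,
    fun y hy hy' ↦ eq_of_artanh_eq_mul hy hxt
      ((artanh_eq_mul_iff (Ioo_subset_Ioo_left (by norm_num) hy)).2 hy') heq,
    setOf_isCritPt_eq hcm hxt heq, ⟨not_isLocalMax_fSym_zero hc, not_isLocalMin_fSym_zero hcm.le⟩,
    isLocalMax_fSym_antidiag hβ0.le hJ12.le hxt' hmax, ?_⟩
  simpa using isLocalMax_fSym_antidiag hβ0.le hJ12.le (neg_mem_Ioo_iff.2 (by rwa [neg_neg]))
    fun x hx ↦ (cwPressure_neg _ xt).symm ▸ hmax x hx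
end

section
/- Fix s ∈ (0,1]. For each t with 0 < t < s, let x(t) denote the unique solution in (0,1) of t·artanh(x) = s·x. Then, as t → 0⁺, x(t) → 1 and (s/2)·x(t)² − t·𝓘(x(t)) → s/2. -/
/-!
From `log y ≤ y - 1` one gets `artanh x ≤ x / (1 - x)`, so the defining equation
`t · artanh x(t) = s · x(t)` forces `1 - t / s ≤ x(t) < 1`, and `x(t) → 1` by squeezing.
Since `y ↦ y log y` is continuous on all of `ℝ`, so is `𝓘`; hence `t · 𝓘(x(t)) → 0 · 𝓘(1) = 0`.
-/

open Filter

/-- The inverse hyperbolic tangent, artanh(x) = (1/2)·log((1+x)/(1−x)). -/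
noncomputable def artanh (x : ℝ) : ℝ := (1 / 2) * Real.log ((1 + x) / (1 - x))

lemma artanh_le_div_one_sub {x : ℝ} (h₀ : -1 < x) (h₁ : x < 1) : artanh x ≤ x / (1 - x) := by
  have hpos : 0 < (1 + x) / (1 - x) := div_pos (by linarith) (by linarith)
  have hlog := Real.log_le_sub_one_of_pos hpos
  have hsub : (1 + x) / (1 - x) - 1 = 2 * (x / (1 - x)) := by
    field_simp [(by linarith : (1 : ℝ) - x ≠ 0)]
    ring
  unfold artanh
  linarith

lemma one_sub_le_div_of_mul_artanh_eq {s t x : ℝ} (hs : 0 < s) (ht : 0 ≤ t) (h₀ : 0 < x)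
    (h₁ : x < 1) (h : t * artanh x = s * x) : 1 - x ≤ t / s := by
  have hx : 0 < 1 - x := by linarith
  have hbound : s * x ≤ t * (x / (1 - x)) :=
    h ▸ mul_le_mul_of_nonneg_left (artanh_le_div_one_sub (by linarith) h₁) ht
  have hmul : s * (1 - x) ≤ t := by
    rw [mul_div_assoc', le_div_iff₀ hx] at hbound
    nlinarith
  rwa [le_div_iff₀ hs, mul_comm]

lemma continuous_entI : Continuous entI := by
  have := Real.continuous_mul_log
  unfold entI
  fun_prop

/-- As t → 0⁺, the unique solution x(t) ∈ (0,1) of t·artanh(x) = s·x tends to 1, and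
(s/2)·x(t)² − t·𝓘(x(t)) tends to s/2. -/
theorem maximizer_limit (s : ℝ) (hs : s ∈ Set.Ioc (0 : ℝ) 1) (x : ℝ → ℝ)
    (hx : ∀ t ∈ Set.Ioo (0 : ℝ) s, x t ∈ Set.Ioo (0 : ℝ) 1 ∧
      t * artanh (x t) = s * x t ∧
      ∀ y ∈ Set.Ioo (0 : ℝ) 1, t * artanh y = s * y → y = x t) :
    Tendsto x (nhdsWithin 0 (Set.Ioi 0)) (nhds 1) ∧
      Tendsto (fun t => s / 2 * (x t) ^ 2 - t * entI (x t))
        (nhdsWithin 0 (Set.Ioi 0)) (nhds (s / 2)) := by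
  have hs₀ : 0 < s := hs.1
  have hbounds : ∀ᶠ t in nhdsWithin 0 (Set.Ioi 0), 1 - t / s ≤ x t ∧ x t ≤ 1 := by
    filter_upwards [Ioo_mem_nhdsGT hs₀] with t ht
    obtain ⟨⟨hx₀, hx₁⟩, heq, -⟩ := hx t ht
    exact ⟨by linarith [one_sub_le_div_of_mul_artanh_eq hs₀ ht.1.le hx₀ hx₁ heq], hx₁.le⟩
  have hlower : Tendsto (fun t : ℝ => 1 - t / s) (nhdsWithin 0 (Set.Ioi 0)) (nhds 1) :=
    tendsto_nhdsWithin_of_tendsto_nhds <|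
      (continuous_const.sub (continuous_id.div_const s)).tendsto' 0 1 (by simp)
  have hlim : Tendsto x (nhdsWithin 0 (Set.Ioi 0)) (nhds 1) :=
    tendsto_of_tendsto_of_tendsto_of_le_of_le' hlower tendsto_const_nhds
      (hbounds.mono fun _ h => h.1) (hbounds.mono fun _ h => h.2)
  refine ⟨hlim, ?_⟩
  have hent := (continuous_entI.tendsto 1).comp hlim
  have hid : Tendsto (fun t : ℝ => t) (nhdsWithin 0 (Set.Ioi 0)) (nhds 0) :=
    tendsto_nhdsWithin_of_tendsto_nhds tendsto_id
  simpa using ((hlim.pow 2).const_mul (s / 2)).sub (hid.mul hent)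
end
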